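/- arXiv:2305.00269 — 5 statements merged into one kernel-verified Lean document; each statement's English description precedes it below -/
import Mathlib

section
/- Let σ be a permutation of Fin n with cycle type (j_i(σ))_{i=1}^∞, where j_i(σ) is the number of cycles of length i in the disjoint cycle decomposition of σ (counting fixed points as 1-cycles). Then the number of binary operations ∗ on Fin n for which σ is a magma automorphism equals ∏_{r,s=1}^n (∑_{d ∣ lcm(r,s)} d · j_d(σ))^{gcd(r,s) · j_r(σ) · j_s(σ)}. -/
/-! `σ` is an automorphism of `(Fin n, f)` iff the uncurried operation `Fin n × Fin n → Fin n`
intertwines `σ × σ` with `σ`. Such a map may be prescribed freely at one point of each orbit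
of `σ × σ`, subject only to its value there being fixed by `σ ^ m`, `m` the length of the orbit;
and `σ ^ m` fixes exactly the points on cycles of length dividing `m`, `∑_{d ∣ m} d j_d` of them.
A pair of cycles of `σ` of lengths `r` and `s` carries `r s` points of `Fin n × Fin n`, on which
`σ × σ` has period `lcm r s`, so it splits into `gcd r s` orbits. -/

/-- `cycleCount σ i` is the number of `i`-cycles in the disjoint cycle decomposition of the
permutation `σ` (fixed points counted as `1`-cycles): the points lying on an `i`-cycle are
precisely those of minimal period `i`, and each `i`-cycle contains `i` of them. -/
noncomputable def cycleCount {X : Type*} (σ : Equiv.Perm X) (i : ℕ) : ℕ :=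
  Nat.card {a : X // Function.minimalPeriod (⇑σ) a = i} / i

open Function MulAction Subgroup

theorem Function.Semiconj.perm_zpow {X Y : Type*} {g : X → Y} {τ : Equiv.Perm X}
    {ρ : Equiv.Perm Y} (h : Semiconj g τ ρ) (k : ℤ) : Semiconj g ⇑(τ ^ k) ⇑(ρ ^ k) := by
  induction k using Int.induction_on with
  | zero => exact Semiconj.id_right
  | succ k ih =>
    rw [zpow_add_one, zpow_add_one, Equiv.Perm.coe_mul, Equiv.Perm.coe_mul]
    exact ih.comp_right h
  | pred k ih =>
    rw [zpow_sub_one, zpow_sub_one, Equiv.Perm.coe_mul, Equiv.Perm.coe_mul]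
    exact ih.comp_right (h.inverses_right τ.apply_symm_apply ρ.symm_apply_apply)

namespace Equiv.Perm

variable {X Y I : Type*}

abbrev Orbits (τ : Perm X) : Type _ := orbitRel.Quotient (zpowers τ) X

theorem apply_zpow_apply_eq_of_invariant {τ : Perm X} {u : X → I} (hu : ∀ x, u (τ x) = u x)
    (k : ℤ) (x : X) : u ((τ ^ k) x) = u x :=
  (Semiconj.perm_zpow (ρ := 1) hu k x).trans (by simp)

theorem zpow_apply_eq_zpow_apply_iff (τ : Perm X) (x : X) (i j : ℤ) :
    (τ ^ i) x = (τ ^ j) x ↔ (minimalPeriod τ x : ℤ) ∣ i - j := by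
  rw [eq_comm, ← inv_eq_iff_eq, ← mul_apply, ← zpow_neg, ← zpow_add, neg_add_eq_sub,
    dvd_sub_comm]
  exact zpow_smul_eq_iff_minimalPeriod_dvd (a := τ) (b := x)

theorem zpow_apply_eq_zpow_apply_of_dvd {ρ : Perm Y} {y : Y} {m : ℕ} (hy : (ρ ^ m) y = y)
    {i j : ℤ} (hij : (m : ℤ) ∣ i - j) : (ρ ^ i) y = (ρ ^ j) y :=
  (zpow_apply_eq_zpow_apply_iff ρ y i j).2
    ((Int.natCast_dvd_natCast.2 ((pow_smul_eq_iff_minimalPeriod_dvd (a := ρ)).1 hy)).trans hij)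

theorem exists_zpow_apply_out_eq (τ : Perm X) (x : X) :
    ∃ k : ℤ, (τ ^ k) (Quotient.mk'' x : Orbits τ).out = x := by
  obtain ⟨⟨_, k, rfl⟩, hk⟩ :=
    Quotient.exact' (Quotient.out_eq' (Quotient.mk'' x : Orbits τ)).symm
  exact ⟨k, hk⟩

theorem apply_out_mk_eq_of_invariant {τ : Perm X} {u : X → I} (hu : ∀ x, u (τ x) = u x)
    (x : X) : u (Quotient.mk'' x : Orbits τ).out = u x := by
  obtain ⟨k, hk⟩ := exists_zpow_apply_out_eq τ x
  rw [← apply_zpow_apply_eq_of_invariant hu k, hk]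

theorem card_fiber_mk_eq_minimalPeriod (τ : Perm X) (q : Orbits τ) :
    Nat.card {x // (Quotient.mk'' x : Orbits τ) = q} = minimalPeriod τ q.out := by
  rw [Nat.card_congr ((Equiv.subtypeEquivRight fun _ => orbitRel.Quotient.mem_orbit.symm).trans
    ((Equiv.setCongr (orbitRel.Quotient.orbit_eq_orbit_out q Quotient.out_eq')).trans
      (orbitZPowersEquiv τ q.out))), Nat.card_zmod]
  rfl

theorem card_eq_mul_card_orbits [Finite X] {τ : Perm X} {u : X → I} (hu : ∀ x, u (τ x) = u x)
    {v : I} {m : ℕ} (hm : ∀ x, u x = v → minimalPeriod τ x = m) :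
    Nat.card {x // u x = v} = m * Nat.card {q : Orbits τ // u q.out = v} := by
  have : Fintype {q : Orbits τ // u q.out = v} := Fintype.ofFinite _
  rw [← Nat.card_congr (Equiv.sigmaSubtypeFiberEquivSubtype (Quotient.mk'' : X → Orbits τ)
      (q := fun q => u q.out = v) fun x => by rw [apply_out_mk_eq_of_invariant hu]), Nat.card_sigma,
    Finset.sum_congr rfl fun (q : {q : Orbits τ // u q.out = v}) _ =>
      (card_fiber_mk_eq_minimalPeriod τ q).trans (hm _ q.2), Finset.sum_const,
    Finset.card_univ, ← Nat.card_eq_fintype_card, smul_eq_mul, mul_comm]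

theorem card_semiconj_eq_prod_orbits (τ : Perm X) (ρ : Perm Y) [Fintype (Orbits τ)] :
    Nat.card {g : X → Y // Semiconj g τ ρ} =
      ∏ q : Orbits τ, Nat.card {y // (ρ ^ minimalPeriod τ q.out) y = y} := by
  choose k hk using exists_zpow_apply_out_eq τ
  have fixed {g : X → Y} (hg : Semiconj g τ ρ) (x : X) :
      (ρ ^ minimalPeriod τ x) (g x) = g x := by
    rw [← iterate_eq_pow, ← hg.iterate_right, iterate_minimalPeriod]
  let atReps (g : {g : X → Y // Semiconj g τ ρ}) (q : Orbits τ) :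
      {y // (ρ ^ minimalPeriod τ q.out) y = y} := ⟨g.1 q.out, fixed g.2 _⟩
  suffices Bijective atReps by
    rw [Nat.card_congr (Equiv.ofBijective atReps this), Nat.card_pi]
  constructor
  · intro g g' hgg'
    ext x
    have hout : g.1 (Quotient.mk'' x : Orbits τ).out = g'.1 (Quotient.mk'' x : Orbits τ).out :=
      congrArg (fun f => (f (Quotient.mk'' x)).1) hgg'
    rw [← hk x, g.2.perm_zpow, g'.2.perm_zpow, hout]
  · intro h
    -- extend `h` from the representatives along the orbits: consistent since `h q` is fixed
    -- by `ρ` raised to the length of `q`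
    refine ⟨⟨fun x => (ρ ^ k x) (h (Quotient.mk'' x)).1, fun x => ?_⟩, ?_⟩
    · have hmk : (Quotient.mk'' (τ x) : Orbits τ) = Quotient.mk'' x :=
        Quotient.sound' (mem_orbit x (⟨τ, mem_zpowers τ⟩ : zpowers τ))
      have hτx := hk (τ x)
      dsimp only
      rw [hmk] at hτx ⊢
      rw [← mul_apply, ← zpow_one_add]
      refine zpow_apply_eq_zpow_apply_of_dvd (h _).2 ((zpow_apply_eq_zpow_apply_iff τ _ _ _).1 ?_)
      rw [hτx, zpow_one_add, mul_apply, hk]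
    · funext q
      refine Subtype.ext ?_
      show (ρ ^ k q.out) (h (Quotient.mk'' q.out)).1 = (h q).1
      have hq := hk q.out
      rw [Quotient.out_eq'] at hq ⊢
      refine (zpow_apply_eq_zpow_apply_of_dvd (h q).2 (j := 0) ?_).trans (by simp)
      rw [← zpow_apply_eq_zpow_apply_iff, hq, zpow_zero, one_apply]

theorem minimalPeriod_apply_self [Finite X] (σ : Perm X) (x : X) :
    minimalPeriod σ (σ x) = minimalPeriod σ x :=
  minimalPeriod_apply (σ.injective.mem_periodicPts x)

theorem card_minimalPeriod_eq_mul_cycleCount [Finite X] (σ : Perm X) (d : ℕ) :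
    Nat.card {x // minimalPeriod σ x = d} = d * cycleCount σ d := by
  rw [cycleCount, card_eq_mul_card_orbits (minimalPeriod_apply_self σ) fun _ => id]
  rcases d.eq_zero_or_pos with rfl | hd
  · simp
  · rw [Nat.mul_div_cancel_left _ hd]

theorem card_fixed_pow_eq_sum_divisors [Finite X] (σ : Perm X) {m : ℕ} (hm : m ≠ 0) :
    Nat.card {x // (σ ^ m) x = x} = ∑ d ∈ m.divisors, d * cycleCount σ d := by
  rw [← Nat.card_congr (Equiv.sigmaSubtypeFiberEquivSubtype (minimalPeriod σ)
      (q := (· ∈ m.divisors)) fun x => ?_), Nat.card_sigma]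
  · exact (Finset.sum_coe_sort m.divisors (fun d => Nat.card {x // minimalPeriod σ x = d})).trans
      (Finset.sum_congr rfl fun d _ => card_minimalPeriod_eq_mul_cycleCount σ d)
  · rw [Nat.mem_divisors, and_iff_left hm]
    exact pow_smul_eq_iff_minimalPeriod_dvd (a := σ)

theorem card_orbits_prodCongr {X' : Type*} [Finite X] [Finite X'] (σ : Perm X) (σ' : Perm X')
    {r s : ℕ} (hr : r ≠ 0) (hs : s ≠ 0) :
    Nat.card {q : Orbits (σ.prodCongr σ') //
        (minimalPeriod σ q.out.1, minimalPeriod σ' q.out.2) = (r, s)} =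
      r.gcd s * cycleCount σ r * cycleCount σ' s := by
  have hm (p : X × X') (hp : (minimalPeriod σ p.1, minimalPeriod σ' p.2) = (r, s)) :
      minimalPeriod (σ.prodCongr σ') p = r.lcm s := by
    obtain ⟨hr, hs⟩ := Prod.mk_inj.1 hp
    rw [prodCongr_apply, minimalPeriod_prodMap, hr, hs]
  have hpairs := card_eq_mul_card_orbits
    (u := fun p : X × X' => (minimalPeriod σ p.1, minimalPeriod σ' p.2))
    (fun p => by simp [minimalPeriod_apply_self]) hm
  rw [Nat.card_congr ((Equiv.subtypeEquivRight fun _ => Prod.mk_inj).trans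
      (Equiv.subtypeProdEquivProd (p := (minimalPeriod σ · = r))
        (q := (minimalPeriod σ' · = s)))),
    Nat.card_prod, card_minimalPeriod_eq_mul_cycleCount,
    card_minimalPeriod_eq_mul_cycleCount] at hpairs
  refine Nat.eq_of_mul_eq_mul_left (Nat.pos_of_ne_zero (Nat.lcm_ne_zero hr hs)) ?_
  calc r.lcm s * _ = r * cycleCount σ r * (s * cycleCount σ' s) := hpairs.symm
    _ = r.lcm s * (r.gcd s * cycleCount σ r * cycleCount σ' s) := by
      linear_combination (cycleCount σ r * cycleCount σ' s) * (Nat.gcd_mul_lcm r s).symm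

end Equiv.Perm

open Equiv.Perm Finset

/-- The number of binary operations on `Fin n` admitting a given permutation `σ` as a magma
automorphism equals
`∏_{r,s=1}^n (∑_{d ∣ lcm(r,s)} d jᵢ(σ))^{gcd(r,s) jᵣ(σ) jₛ(σ)}`,
where `(jᵢ(σ))` is the cycle type of `σ`. -/
theorem card_ops_with_automorphism (n : ℕ) (σ : Equiv.Perm (Fin n)) :
    Nat.card {f : Fin n → Fin n → Fin n // ∀ a a' : Fin n, σ (f a a') = f (σ a) (σ a')} =
      ∏ r ∈ Finset.Icc 1 n, ∏ s ∈ Finset.Icc 1 n,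
        (∑ d ∈ (Nat.lcm r s).divisors, d * cycleCount σ d) ^
          (Nat.gcd r s * cycleCount σ r * cycleCount σ s) := by
  let τ : Equiv.Perm (Fin n × Fin n) := σ.prodCongr σ
  have : Fintype τ.Orbits := Fintype.ofFinite _
  let cycleLengths (p : Fin n × Fin n) : ℕ × ℕ := (minimalPeriod σ p.1, minimalPeriod σ p.2)
  let fixedCount (rs : ℕ × ℕ) : ℕ := ∑ d ∈ (rs.1.lcm rs.2).divisors, d * cycleCount σ d
  have period_pos (a : Fin n) : 0 < minimalPeriod σ a :=
    minimalPeriod_pos_of_mem_periodicPts (σ.injective.mem_periodicPts a)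
  have period_mem_Icc (a : Fin n) : minimalPeriod σ a ∈ Icc 1 n :=
    mem_Icc.2 ⟨period_pos a, minimalPeriod_le_card.trans_eq (Fintype.card_fin n)⟩
  calc _ = Nat.card {g : Fin n × Fin n → Fin n // Semiconj g τ σ} :=
        Nat.card_congr <| Equiv.subtypeEquiv (Equiv.curry _ _ _).symm fun f =>
          ⟨fun h p => (h p.1 p.2).symm, fun h a a' => (h (a, a')).symm⟩
    _ = ∏ q : τ.Orbits, fixedCount (cycleLengths q.out) := by
        rw [card_semiconj_eq_prod_orbits]
        refine prod_congr rfl fun q _ => ?_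
        rw [Equiv.prodCongr_apply, minimalPeriod_prodMap, card_fixed_pow_eq_sum_divisors]
        exact Nat.lcm_ne_zero (period_pos _).ne' (period_pos _).ne'
    _ = ∏ rs ∈ Icc 1 n ×ˢ Icc 1 n,
          fixedCount rs ^ #{q : τ.Orbits | cycleLengths q.out = rs} := by
        rw [← prod_fiberwise_of_maps_to' (t := Icc 1 n ×ˢ Icc 1 n)
          (fun q _ => mem_product.2 ⟨period_mem_Icc _, period_mem_Icc _⟩)]
        exact prod_congr rfl fun _ _ => prod_const _
    _ = _ := by
        rw [prod_product]
        refine prod_congr rfl fun r hr => prod_congr rfl fun s hs => ?_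
        rw [← Fintype.card_subtype, ← Nat.card_eq_fintype_card, card_orbits_prodCongr]
        · exact Nat.one_le_iff_ne_zero.1 (mem_Icc.1 hr).1
        · exact Nat.one_le_iff_ne_zero.1 (mem_Icc.1 hs).1
end

section
/- Define the cycle index Z_n of the symmetric group S_n (with respect to its natural action on Fin n) as the multivariate polynomial with rational coefficients Z_n := (1/n!) · ∑_{σ ∈ S_n} ∏_{i=1}^n t_i^{j_i(σ)}, where (j_i(σ))_i is the cycle type of σ. Then Z_0 = 1 and, for all n > 0, Z_n = (1/n) · ∑_{i=1}^n t_i · Z_{n−i}. -/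
/-- The cycle index `Zₙ = (1/n!) ∑_{σ ∈ Sₙ} ∏_{i=1}^n tᵢ^{jᵢ(σ)}` of the symmetric group
`Sₙ` with respect to its natural action on `Fin n`, as a polynomial in the variables
`tᵢ` (indexed by `i : ℕ`) with rational coefficients. -/
noncomputable def cycleIndex (n : ℕ) : MvPolynomial ℕ ℚ :=
  MvPolynomial.C (1 / (Nat.factorial n : ℚ)) *
    ∑ σ : Equiv.Perm (Fin n), ∏ i ∈ Finset.Icc 1 n, MvPolynomial.X i ^ cycleCount σ i

open Equiv Function Finset MvPolynomial
open scoped Nat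

theorem Function.Semiconj.minimalPeriod_eq {α β : Type*} {fa : α → α} {fb : β → β} {g : α → β}
    (h : Semiconj g fa fb) (hg : Injective g) (x : α) :
    minimalPeriod fb (g x) = minimalPeriod fa x :=
  minimalPeriod_eq_minimalPeriod_iff.2 fun n =>
    ⟨fun hx => hg ((h.iterate_right n x).trans hx), fun hx => hx.map h⟩

open Fin.NatCast in
theorem finRotate_iterate_apply {i : ℕ} [NeZero i] (m : ℕ) (k : Fin i) :
    (finRotate i)^[m] k = k + m := by
  induction m with
  | zero => simp
  | succ m ih => rw [iterate_succ_apply', ih, finRotate_apply, Nat.cast_succ, add_assoc]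

theorem minimalPeriod_finRotate {i : ℕ} (k : Fin i) : minimalPeriod (finRotate i) k = i := by
  have : NeZero i := ⟨k.pos.ne'⟩
  have isPeriodicPt_iff (m : ℕ) : IsPeriodicPt (finRotate i) m k ↔ i ∣ m := by
    rw [IsPeriodicPt, IsFixedPt, finRotate_iterate_apply, add_eq_left, Fin.natCast_eq_zero]
  exact Nat.dvd_antisymm (isPeriodicPt_iff_minimalPeriod_dvd.1 ((isPeriodicPt_iff i).2 dvd_rfl))
    ((isPeriodicPt_iff _).1 (isPeriodicPt_minimalPeriod _ _))

theorem card_minimalPeriod_finRotate (i j : ℕ) :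
    Nat.card {k : Fin i // minimalPeriod (finRotate i) k = j} = if j = i then i else 0 := by
  simp only [minimalPeriod_finRotate]
  split_ifs with hj
  · simp [hj]
  · simp [Ne.symm hj]

namespace Equiv.Perm

variable {α β : Type*}

theorem minimalPeriod_permCongr (e : α ≃ β) (σ : Perm α) (a : α) :
    minimalPeriod (e.permCongr σ) (e a) = minimalPeriod σ a :=
  Semiconj.minimalPeriod_eq (fun x => by simp) e.injective a

theorem card_minimalPeriod_permCongr (e : α ≃ β) (σ : Perm α) (j : ℕ) :
    Nat.card {b // minimalPeriod (e.permCongr σ) b = j} = Nat.card {a // minimalPeriod σ a = j} :=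
  Nat.card_congr (e.subtypeEquiv fun a => by rw [minimalPeriod_permCongr]).symm

theorem card_minimalPeriod_subtypeCongr [Finite α] {p : α → Prop} [DecidablePred p]
    (σ : Perm {a // p a}) (τ : Perm {a // ¬p a}) (j : ℕ) :
    Nat.card {a // minimalPeriod (σ.subtypeCongr τ) a = j} =
      Nat.card {a // minimalPeriod σ a = j} + Nat.card {a // minimalPeriod τ a = j} := by
  have hσ := Semiconj.minimalPeriod_eq (fun a => (subtypeCongr.left_apply_subtype σ τ a).symm)
    Subtype.val_injective
  have hτ := Semiconj.minimalPeriod_eq (fun a => (subtypeCongr.right_apply_subtype σ τ a).symm)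
    Subtype.val_injective
  rw [← Nat.card_sum]
  refine Nat.card_congr <| ((sumCompl p).subtypeEquiv fun _ => Iff.rfl).symm.trans <|
    subtypeSum.trans <|
      Equiv.sumCongr (subtypeEquivRight fun a => ?_) (subtypeEquivRight fun a => ?_)
  · rw [sumCompl_apply_inl, hσ]
  · rw [sumCompl_apply_inr, hτ]

end Equiv.Perm

section CycleCount

variable {α β : Type*}

theorem cycleCount_permCongr (e : α ≃ β) (σ : Perm α) (j : ℕ) :
    cycleCount (e.permCongr σ) j = cycleCount σ j := by
  rw [cycleCount, cycleCount, Perm.card_minimalPeriod_permCongr]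

theorem cycleCount_eq_zero_of_card_lt [Finite α] (σ : Perm α) {j : ℕ} (hj : Nat.card α < j) :
    cycleCount σ j = 0 :=
  Nat.div_eq_of_lt ((Finite.card_subtype_le _).trans_lt hj)

noncomputable def cycleMonomial (σ : Perm α) : MvPolynomial ℕ ℚ :=
  ∏ j ∈ Icc 1 (Nat.card α), X j ^ cycleCount σ j

theorem cycleMonomial_eq_prod_Icc [Finite α] (σ : Perm α) {N : ℕ} (hN : Nat.card α ≤ N) :
    cycleMonomial σ = ∏ j ∈ Icc 1 N, X j ^ cycleCount σ j := by
  refine prod_subset (Icc_subset_Icc_right hN) fun j hjN hj => ?_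
  have hj : Nat.card α < j := by
    simp only [mem_Icc] at hjN hj
    omega
  rw [cycleCount_eq_zero_of_card_lt σ hj, pow_zero]

theorem cycleMonomial_permCongr (e : α ≃ β) (σ : Perm α) :
    cycleMonomial (e.permCongr σ) = cycleMonomial σ := by
  simp only [cycleMonomial, cycleCount_permCongr, Nat.card_congr e]

variable (α) in
noncomputable def cycleSum [Fintype α] [DecidableEq α] : MvPolynomial ℕ ℚ :=
  ∑ σ : Perm α, cycleMonomial σ

theorem cycleSum_congr [Fintype α] [DecidableEq α] [Fintype β] [DecidableEq β] (e : α ≃ β) :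
    cycleSum α = cycleSum β :=
  Fintype.sum_equiv e.permCongr _ _ fun σ => (cycleMonomial_permCongr e σ).symm

end CycleCount

theorem cycleSum_eq_C_mul_cycleIndex (n : ℕ) : cycleSum (Fin n) = C (n ! : ℚ) * cycleIndex n := by
  simp only [cycleIndex, cycleSum, cycleMonomial, Nat.card_eq_fintype_card, Fintype.card_fin,
    ← mul_assoc, ← map_mul]
  rw [mul_one_div_cancel (by positivity), map_one, one_mul]

namespace Equiv.Perm

variable {α : Type*} [DecidableEq α] {i : ℕ}

noncomputable def insertCycle (f : Fin i ↪ α) (τ : Perm {x // x ∉ Set.range f}) : Perm α :=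
  ((ofInjective f f.injective).permCongr (finRotate i)).subtypeCongr τ

section InsertCycle

variable (f : Fin i ↪ α) (τ : Perm {x // x ∉ Set.range f})

theorem insertCycle_apply_of_notMem {x : α} (hx : x ∉ Set.range f) :
    insertCycle f τ x = τ ⟨x, hx⟩ :=
  subtypeCongr.right_apply _ _ hx

theorem semiconj_insertCycle : Semiconj f (finRotate i) (insertCycle f τ) := fun k => by
  rw [insertCycle, subtypeCongr.left_apply _ _ ⟨k, rfl⟩]
  change _ = ((ofInjective f f.injective).permCongr (finRotate i) (ofInjective f f.injective k) : α)
  rw [permCongr_apply, symm_apply_apply]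
  rfl

theorem minimalPeriod_insertCycle_apply (k : Fin i) : minimalPeriod (insertCycle f τ) (f k) = i :=
  ((semiconj_insertCycle f τ).minimalPeriod_eq f.injective k).trans (minimalPeriod_finRotate k)

variable [NeZero i]

theorem cycleCount_insertCycle [Finite α] (j : ℕ) :
    cycleCount (insertCycle f τ) j = cycleCount τ j + if j = i then 1 else 0 := by
  rw [cycleCount, cycleCount, insertCycle, card_minimalPeriod_subtypeCongr,
    card_minimalPeriod_permCongr, card_minimalPeriod_finRotate]
  split_ifs with hj
  · subst hj
    rw [add_comm, Nat.add_div_right _ (NeZero.pos j)]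
  · rw [zero_add, add_zero]

theorem cycleMonomial_insertCycle [Finite α] :
    cycleMonomial (insertCycle f τ) = X i * cycleMonomial τ := by
  have hi : i ≤ Nat.card α := by simpa using Finite.card_le_of_embedding f
  rw [cycleMonomial, cycleMonomial_eq_prod_Icc τ (Finite.card_subtype_le _)]
  simp only [cycleCount_insertCycle, pow_add, prod_mul_distrib, pow_ite, pow_one, pow_zero,
    prod_ite_eq', mem_Icc, NeZero.one_le, hi, and_self, if_true, mul_comm]

theorem insertCycle_iterate_apply_zero (k : Fin i) : (insertCycle f τ)^[k] (f 0) = f k := by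
  rw [← (semiconj_insertCycle f τ).iterate_right k 0, finRotate_iterate_apply, zero_add,
    Fin.cast_val_eq_self]

end InsertCycle

variable [NeZero i]

theorem insertCycle_injective :
    Injective fun q : Σ f : Fin i ↪ α, Perm {x // x ∉ Set.range f} =>
      (insertCycle q.1 q.2, q.1 0) := by
  rintro ⟨f₁, τ₁⟩ ⟨f₂, τ₂⟩ h
  obtain ⟨hσ, h0⟩ := Prod.mk.inj h
  obtain rfl : f₁ = f₂ := Embedding.ext fun k => by
    rw [← insertCycle_iterate_apply_zero f₁ τ₁, hσ, h0, insertCycle_iterate_apply_zero]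
  obtain rfl : τ₁ = τ₂ := Equiv.ext fun x => Subtype.ext <| by
    rw [← insertCycle_apply_of_notMem, hσ, insertCycle_apply_of_notMem]
  rfl

theorem exists_insertCycle_eq [Finite α] (σ : Perm α) (a : α) (ha : minimalPeriod σ a = i) :
    ∃ (f : Fin i ↪ α) (τ : Perm {x // x ∉ Set.range f}), insertCycle f τ = σ ∧ f 0 = a := by
  subst ha
  let f : Fin (minimalPeriod σ a) ↪ α :=
    ⟨fun k => σ^[k] a, fun k l h => Fin.ext (iterate_injOn_Iio_minimalPeriod k.2 l.2 h)⟩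
  have hsemi : Semiconj f (finRotate _) σ := fun k => by
    change σ^[(finRotate _ k : ℕ)] a = σ (σ^[k] a)
    rw [finRotate_apply, Fin.val_add, Fin.val_one', Nat.add_mod_mod, iterate_mod_minimalPeriod_eq,
      iterate_succ_apply']
  have hstable : ∀ x, σ x ∈ Set.range f ↔ x ∈ Set.range f := fun x =>
    ⟨fun ⟨k, hk⟩ => ⟨(finRotate _).symm k, σ.injective (by rw [← hsemi, apply_symm_apply, hk])⟩,
      fun ⟨k, hk⟩ => ⟨finRotate _ k, by rw [hsemi, hk]⟩⟩
  refine ⟨f, σ.subtypePerm fun x => (hstable x).not, Equiv.ext fun x => ?_, rfl⟩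
  by_cases hx : x ∈ Set.range f
  · obtain ⟨k, rfl⟩ := hx
    rw [← semiconj_insertCycle, hsemi]
  · rw [insertCycle_apply_of_notMem _ _ hx]
    rfl

end Equiv.Perm

section Counting

variable {α : Type*} [Fintype α] [DecidableEq α]

theorem card_compl_range_embedding {ι : Type*} [Fintype ι] (f : ι ↪ α) :
    Fintype.card {x // x ∉ Set.range f} = Fintype.card α - Fintype.card ι := by
  rw [Fintype.card_subtype_compl, Set.card_range_of_injective f.injective]

theorem sum_cycleMonomial_of_minimalPeriod_eq (i : ℕ) [NeZero i] :
    ∑ p : Perm α × α with minimalPeriod p.1 p.2 = i, cycleMonomial p.1 =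
      (Fintype.card α).descFactorial i • (X i * cycleSum (Fin (Fintype.card α - i))) := by
  have hcompl (f : Fin i ↪ α) :
      cycleSum {x // x ∉ Set.range f} = cycleSum (Fin (Fintype.card α - i)) :=
    cycleSum_congr (Fintype.equivFinOfCardEq ((card_compl_range_embedding f).trans (by simp)))
  calc ∑ p : Perm α × α with minimalPeriod p.1 p.2 = i, cycleMonomial p.1
      = ∑ q : Σ f : Fin i ↪ α, Perm {x // x ∉ Set.range f},
          cycleMonomial (Perm.insertCycle q.1 q.2) := by
        symm
        apply sum_nbij fun q => (Perm.insertCycle q.1 q.2, q.1 0)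
        · exact fun q _ => mem_filter.2 ⟨mem_univ _, Perm.minimalPeriod_insertCycle_apply _ _ _⟩
        · exact Perm.insertCycle_injective.injOn
        · intro p hp
          obtain ⟨f, τ, hσ, ha⟩ := Perm.exists_insertCycle_eq p.1 p.2 (mem_filter.1 hp).2
          exact ⟨⟨f, τ⟩, mem_coe.2 (mem_univ _), Prod.ext hσ ha⟩
        · exact fun _ _ => rfl
    _ = ∑ f : Fin i ↪ α, X i * cycleSum {x // x ∉ Set.range f} := by
        simp only [Fintype.sum_sigma, Perm.cycleMonomial_insertCycle, cycleSum, mul_sum]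
    _ = _ := by
        simp only [hcompl, sum_const, Finset.card_univ, Fintype.card_embedding_eq,
          Fintype.card_fin]

theorem card_smul_cycleSum :
    Fintype.card α • cycleSum α = ∑ i ∈ Icc 1 (Fintype.card α),
      (Fintype.card α).descFactorial i • (X i * cycleSum (Fin (Fintype.card α - i))) := by
  calc Fintype.card α • cycleSum α = ∑ p : Perm α × α, cycleMonomial p.1 := by
        simp [cycleSum, Fintype.sum_prod_type, smul_sum]
    _ = ∑ i ∈ Icc 1 (Fintype.card α),
          ∑ p : Perm α × α with minimalPeriod p.1 p.2 = i, cycleMonomial p.1 := by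
        refine (sum_fiberwise_of_maps_to (fun p _ => mem_Icc.2 ⟨?_, minimalPeriod_le_card⟩) _).symm
        exact minimalPeriod_pos_of_mem_periodicPts (p.1.injective.mem_periodicPts p.2)
    _ = _ := sum_congr rfl fun i hi =>
        have : NeZero i := ⟨by have := (mem_Icc.1 hi).1; omega⟩
        sum_cycleMonomial_of_minimalPeriod_eq i

end Counting

/-- Pletsch's recursion: `Z₀ = 1` and `Zₙ = (1/n) ∑_{i=1}^n tᵢ Z_{n-i}` for `n > 0`. -/
theorem cycleIndex_recursion :
    cycleIndex 0 = 1 ∧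
      ∀ n : ℕ, 0 < n →
        cycleIndex n =
          MvPolynomial.C (1 / (n : ℚ)) *
            ∑ i ∈ Finset.Icc 1 n, MvPolynomial.X i * cycleIndex (n - i) := by
  refine ⟨by simp [cycleIndex], fun n hn => ?_⟩
  have hterm : ∀ i ∈ Icc 1 n, n.descFactorial i • (X i * cycleSum (Fin (n - i))) =
      C (n ! : ℚ) * (X i * cycleIndex (n - i)) := fun i hi => by
    rw [cycleSum_eq_C_mul_cycleIndex, ← Nat.factorial_mul_descFactorial (mem_Icc.1 hi).2,
      nsmul_eq_mul, ← map_natCast C]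
    push_cast
    rw [map_mul]
    ring
  have hcount : C (n ! : ℚ) * (C (n : ℚ) * cycleIndex n) =
      C (n ! : ℚ) * ∑ i ∈ Icc 1 n, X i * cycleIndex (n - i) := by
    have := card_smul_cycleSum (α := Fin n)
    rw [Fintype.card_fin, sum_congr rfl hterm, cycleSum_eq_C_mul_cycleIndex, nsmul_eq_mul,
      ← map_natCast C] at this
    rw [mul_sum, ← this]
    ring
  rw [← mul_right_injective₀ (by simp [n.factorial_ne_zero]) hcount, ← mul_assoc, ← map_mul,
    one_div_mul_cancel (by exact_mod_cast hn.ne'), map_one, one_mul]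
end

section
/- Let σ be a permutation of Fin n with cycle type (j_i(σ))_{i=1}^∞, and let σ × σ denote the permutation of Fin n × Fin n given by (a, a') ↦ (σ(a), σ(a')). Then the cycle type (j'_m)_{m=1}^∞ of σ × σ is given by j'_m = ∑_{(r,s) ∈ [n]², lcm(r,s) = m} gcd(r, s) · j_r(σ) · j_s(σ) for every positive integer m. -/
open Finset Function MulAction

theorem MulAction.dvd_card_of_dvd_card_orbit {G X : Type*} [Group G] [MulAction G X] [Fintype X]
    {s : Finset X} {r : ℕ} (hs : ∀ g : G, ∀ x ∈ s, g • x ∈ s)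
    (hr : ∀ x ∈ s, r ∣ Nat.card (orbit G x)) : r ∣ #s := by
  classical
  rw [card_eq_sum_card_fiberwise (f := Quotient.mk (orbitRel G X)) (t := univ)
    fun _ _ => mem_univ _]
  refine dvd_sum fun q _ => ?_
  obtain ⟨x, rfl⟩ := Quotient.exists_rep q
  have hfiber :
      {y ∈ s | Quotient.mk (orbitRel G X) y = ⟦x⟧} = {y ∈ s | y ∈ orbit G x} := by
    simp only [Quotient.eq, orbitRel_apply]
  by_cases hx : x ∈ s
  · have horbit : {y ∈ s | y ∈ orbit G x} = (orbit G x).toFinset := by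
      ext y
      simp only [mem_filter, Set.mem_toFinset, and_iff_right_iff_imp]
      rintro ⟨g, rfl⟩
      exact hs g x hx
    rw [hfiber, horbit, Set.toFinset_card, ← Nat.card_eq_fintype_card]
    exact hr x hx
  · have hempty : {y ∈ s | y ∈ orbit G x} = ∅ := by
      refine filter_false_of_mem ?_
      rintro _ hy ⟨g, rfl⟩
      exact hx (inv_smul_smul g x ▸ hs g⁻¹ _ hy)
    rw [hfiber, hempty, card_empty]
    exact dvd_zero r

namespace Equiv.Perm

variable {X Y : Type*}

theorem card_orbit_zpowers (σ : Perm X) (x : X) :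
    Nat.card (orbit (Subgroup.zpowers σ) x) = minimalPeriod σ x := by
  rw [Nat.card_congr (orbitZPowersEquiv σ x), Nat.card_zmod]
  rfl

variable [Fintype X] [Fintype Y]

theorem minimalPeriod_mem_Icc (σ : Perm X) (x : X) :
    minimalPeriod σ x ∈ Icc 1 (Fintype.card X) :=
  mem_Icc.2 ⟨minimalPeriod_pos_of_mem_periodicPts (σ.injective.mem_periodicPts x),
    minimalPeriod_le_card⟩

theorem dvd_card_minimalPeriod_eq (σ : Perm X) (r : ℕ) :
    r ∣ #{x | minimalPeriod σ x = r} := by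
  refine dvd_card_of_dvd_card_orbit (G := Subgroup.zpowers σ) (fun g x hx => ?_) fun x hx => ?_
  · rw [mem_filter] at hx ⊢
    rw [← card_orbit_zpowers, orbit_smul, card_orbit_zpowers, hx.2]
    exact ⟨mem_univ _, rfl⟩
  · rw [card_orbit_zpowers, (mem_filter.1 hx).2]

theorem mul_cycleCount_eq_card (σ : Perm X) (r : ℕ) :
    r * cycleCount σ r = #{x | minimalPeriod σ x = r} := by
  rw [cycleCount, Nat.card_eq_fintype_card, Fintype.card_subtype]
  exact Nat.mul_div_cancel' (dvd_card_minimalPeriod_eq σ r)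

theorem card_minimalPeriod_prodCongr_eq (σ : Perm X) (τ : Perm Y) (m : ℕ) :
    #{p | minimalPeriod (σ.prodCongr τ) p = m} =
      ∑ q ∈ (Icc 1 (Fintype.card X) ×ˢ Icc 1 (Fintype.card Y)).filter
          (fun q => Nat.lcm q.1 q.2 = m),
        #{x | minimalPeriod σ x = q.1} * #{y | minimalPeriod τ y = q.2} := by
  have hper (p : X × Y) : minimalPeriod (σ.prodCongr τ) p =
      Nat.lcm (minimalPeriod σ p.1) (minimalPeriod τ p.2) :=
    minimalPeriod_prodMap σ τ p
  rw [card_eq_sum_card_fiberwise (f := fun p => (minimalPeriod σ p.1, minimalPeriod τ p.2))]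
  · refine sum_congr rfl fun q hq => ?_
    rw [← card_product]
    congr 1
    ext p
    simp only [mem_filter, mem_univ, true_and, mem_product, Prod.ext_iff, hper]
    refine ⟨fun h => h.2, fun h => ⟨?_, h⟩⟩
    rw [h.1, h.2]
    exact (mem_filter.1 hq).2
  · intro p hp
    simp only [coe_filter, mem_univ, true_and, Set.mem_ofPred_eq, hper] at hp
    exact mem_filter.2
      ⟨mem_product.2 ⟨minimalPeriod_mem_Icc σ p.1, minimalPeriod_mem_Icc τ p.2⟩, hp⟩

end Equiv.Perm

open Equiv.Perm in
theorem cycleCount_prodCongr' {X Y : Type*} [Fintype X] [Fintype Y] (σ : Equiv.Perm X)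
    (τ : Equiv.Perm Y) (m : ℕ) :
    cycleCount (σ.prodCongr τ) m =
      ∑ q ∈ (Icc 1 (Fintype.card X) ×ˢ Icc 1 (Fintype.card Y)).filter
          (fun q => Nat.lcm q.1 q.2 = m),
        Nat.gcd q.1 q.2 * cycleCount σ q.1 * cycleCount τ q.2 := by
  rcases Nat.eq_zero_or_pos m with rfl | hm
  -- `cycleCount _ 0` is a division by zero, and no lcm of positive numbers vanishes.
  · refine (Nat.div_zero _).trans (sum_eq_zero fun q hq => ?_).symm
    simp only [mem_filter, mem_product, mem_Icc, Nat.lcm_eq_zero_iff] at hq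
    omega
  refine Nat.eq_of_mul_eq_mul_left hm ?_
  rw [mul_cycleCount_eq_card, card_minimalPeriod_prodCongr_eq, mul_sum]
  refine sum_congr rfl fun q hq => ?_
  rw [← mul_cycleCount_eq_card, ← mul_cycleCount_eq_card, ← (mem_filter.1 hq).2]
  calc q.1 * cycleCount σ q.1 * (q.2 * cycleCount τ q.2)
      = q.1 * q.2 * (cycleCount σ q.1 * cycleCount τ q.2) := by ring
    _ = _ := by rw [← Nat.gcd_mul_lcm q.1 q.2]; ring

theorem cycleCount_prodCongr_general (n : ℕ) (σ : Equiv.Perm (Fin n)) (m : ℕ) :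
    cycleCount (Equiv.prodCongr σ σ) m =
      ∑ p ∈ (Finset.Icc 1 n ×ˢ Finset.Icc 1 n).filter (fun p => Nat.lcm p.1 p.2 = m),
        Nat.gcd p.1 p.2 * cycleCount σ p.1 * cycleCount σ p.2 := by
  simpa only [Fintype.card_fin] using cycleCount_prodCongr' σ σ m

/-- The cycle type `(j'ₘ)` of the permutation `σ × σ` of `Fin n × Fin n` is given by
`j'ₘ = ∑_{(r,s) ∈ [n]², lcm(r,s) = m} gcd(r,s) jᵣ(σ) jₛ(σ)`, where `(jᵢ(σ))` is the
cycle type of `σ`. -/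
theorem cycleCount_prodCongr (n : ℕ) (σ : Equiv.Perm (Fin n)) (m : ℕ) (hm : 0 < m) :
    cycleCount (Equiv.prodCongr σ σ) m =
      ∑ p ∈ (Finset.Icc 1 n ×ˢ Finset.Icc 1 n).filter (fun p => Nat.lcm p.1 p.2 = m),
        Nat.gcd p.1 p.2 * cycleCount σ p.1 * cycleCount σ p.2 :=
  cycleCount_prodCongr_general n σ m
end

section
/- Let n ≥ 4 and let σ be a permutation of Fin n. Then every cycle of the permutation σ × σ of Fin n × Fin n (acting componentwise) has length at most ⌊n²/4⌋. -/
/-!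
Let `p` and `q` be the periods of `a` and `a'` under `σ`; the period of `(a, a')` under `σ × σ`
is `lcm p q`. The cycles of `σ` through `a` and `a'` are either equal or disjoint. In the first
case `lcm p q = p ≤ n ≤ n² / 4`, using `n ≥ 4`; in the second `p + q ≤ n`, so by AM-GM
`lcm p q ≤ p q ≤ (p + q)² / 4 ≤ n² / 4`.
-/

open Function MulAction

theorem Nat.mul_le_sq_div_four_of_add_le {p q n : ℕ} (h : p + q ≤ n) : p * q ≤ n ^ 2 / 4 := by
  rw [Nat.le_div_iff_mul_le four_pos]
  nlinarith [sq_nonneg ((p : ℤ) - q)]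

namespace Equiv.Perm

variable {α : Type*} [Finite α]

theorem minimalPeriod_pos (σ : Perm α) (a : α) : 0 < minimalPeriod σ a :=
  minimalPeriod_pos_of_mem_periodicPts (σ.injective.mem_periodicPts a)

theorem minimalPeriod_eq_ncard_orbit (σ : Perm α) (a : α) :
    minimalPeriod σ a = (orbit (Subgroup.zpowers σ) a).ncard := by
  have := Fintype.ofFinite (orbit (Subgroup.zpowers σ) a)
  rw [← Nat.card_coe_set_eq, Nat.card_eq_fintype_card, ← minimalPeriod_eq_card]
  rfl

theorem minimalPeriod_le_card (σ : Perm α) (a : α) : minimalPeriod σ a ≤ Nat.card α :=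
  (σ.minimalPeriod_eq_ncard_orbit a).trans_le (Set.ncard_le_card _)

theorem minimalPeriod_eq_or_add_le_card (σ : Perm α) (a b : α) :
    minimalPeriod σ a = minimalPeriod σ b ∨
      minimalPeriod σ a + minimalPeriod σ b ≤ Nat.card α := by
  simp only [minimalPeriod_eq_ncard_orbit]
  refine (orbit.eq_or_disjoint a b).imp (congrArg Set.ncard) fun hdisj ↦ ?_
  rw [← Set.ncard_union_eq hdisj]
  exact Set.ncard_le_card _

theorem minimalPeriod_prodCongr_self_le (σ : Perm α) (hα : 4 ≤ Nat.card α) (x : α × α) :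
    minimalPeriod (prodCongr σ σ) x ≤ Nat.card α ^ 2 / 4 := by
  change minimalPeriod (Prod.map σ σ) x ≤ _
  rw [minimalPeriod_prodMap]
  rcases σ.minimalPeriod_eq_or_add_le_card x.1 x.2 with hsame | hsum
  · rw [hsame, Nat.lcm_self]
    calc minimalPeriod σ x.2 ≤ Nat.card α := σ.minimalPeriod_le_card x.2
      _ ≤ Nat.card α ^ 2 / 4 := by rw [Nat.le_div_iff_mul_le four_pos]; nlinarith
  · calc _ ≤ minimalPeriod σ x.1 * minimalPeriod σ x.2 :=
          Nat.le_of_dvd (Nat.mul_pos (σ.minimalPeriod_pos _) (σ.minimalPeriod_pos _))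
            (Nat.lcm_dvd_mul _ _)
      _ ≤ Nat.card α ^ 2 / 4 := Nat.mul_le_sq_div_four_of_add_le hsum

end Equiv.Perm

/-- For `n ≥ 4`, every cycle of the permutation `σ × σ` of `Fin n × Fin n` has length at
most `⌊n²/4⌋` (the cycle length of a point is its minimal period). -/
theorem cycle_length_prodCongr_le (n : ℕ) (hn : 4 ≤ n) (σ : Equiv.Perm (Fin n))
    (x : Fin n × Fin n) :
    Function.minimalPeriod (⇑(Equiv.prodCongr σ σ)) x ≤ n ^ 2 / 4 := by
  simpa using σ.minimalPeriod_prodCongr_self_le (by simpa using hn) x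
end

section
/- Let k, n be non-negative integers and σ a permutation of Fin n with cycle type (j_i(σ))_{i=1}^∞, and let σ^{×k} denote the permutation of (Fin n)^k acting componentwise by σ. Then the cycle type (j'_m)_{m=1}^∞ of σ^{×k} is given by j'_m = ∑_{(r_1,…,r_k) ∈ [n]^k, lcm(r_1,…,r_k) = m} (r_1⋯r_k / lcm(r_1,…,r_k)) · j_{r_1}(σ) ⋯ j_{r_k}(σ) for every positive integer m, where lcm of the empty tuple is taken to be 1. -/
open Function Finset

section Aux

variable {n : ℕ} (σ : Equiv.Perm (Fin n))

lemma mem_periodicPts_perm (x : Fin n) : x ∈ periodicPts ⇑σ :=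
  mk_mem_periodicPts (orderOf_pos σ)
    (by show (⇑σ)^[orderOf σ] x = x; rw [Equiv.Perm.iterate_eq_pow, pow_orderOf_eq_one]; rfl)

lemma minPeriod_pos (x : Fin n) : 0 < Function.minimalPeriod ⇑σ x :=
  minimalPeriod_pos_of_mem_periodicPts (mem_periodicPts_perm σ x)

lemma minPeriod_le (x : Fin n) : Function.minimalPeriod ⇑σ x ≤ n := by
  classical
  have hinj : Set.InjOn (fun j => (⇑σ)^[j] x)
      ↑(Finset.range (Function.minimalPeriod ⇑σ x)) := by
    intro a ha b hb hab
    exact iterate_injOn_Iio_minimalPeriod (by simpa using ha) (by simpa using hb) hab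
  calc Function.minimalPeriod ⇑σ x
      = ((Finset.range (Function.minimalPeriod ⇑σ x)).image fun j => (⇑σ)^[j] x).card := by
        rw [Finset.card_image_of_injOn hinj, Finset.card_range]
    _ ≤ Fintype.card (Fin n) := Finset.card_le_univ _
    _ = n := Fintype.card_fin n

lemma dvd_card_of_minPeriod {p : ℕ} (hp : 0 < p) :
    ∀ A : Finset (Fin n), (∀ x ∈ A, Function.minimalPeriod ⇑σ x = p) →
      (∀ x ∈ A, σ x ∈ A) → p ∣ A.card := by
  intro A
  induction A using Finset.strongInduction with
  | _ A ih =>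
    intro hA hcl
    rcases A.eq_empty_or_nonempty with rfl | ⟨x, hx⟩
    · simp
    · have hpx : Function.minimalPeriod ⇑σ x = p := hA x hx
      set O : Finset (Fin n) := (Finset.range p).image (fun j => (⇑σ)^[j] x) with hO
      have hOmem : ∀ j, (⇑σ)^[j] x ∈ O := by
        intro j
        have h1 : (⇑σ)^[j % p] x = (⇑σ)^[j] x := by
          rw [← hpx]; exact iterate_mod_minimalPeriod_eq
        rw [← h1]
        exact Finset.mem_image_of_mem _ (Finset.mem_range.2 (Nat.mod_lt _ hp))
      have hiter : ∀ j, (⇑σ)^[j] x ∈ A := by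
        intro j
        induction j with
        | zero => exact hx
        | succ j ihj => rw [Function.iterate_succ_apply']; exact hcl _ ihj
      have hOsub : O ⊆ A := by
        intro y hy
        obtain ⟨j, _, rfl⟩ := Finset.mem_image.1 hy
        exact hiter j
      have hcardO : O.card = p := by
        rw [hO, Finset.card_image_of_injOn, Finset.card_range]
        intro a ha b hb hab
        exact iterate_injOn_Iio_minimalPeriod (by simpa [hpx] using ha)
          (by simpa [hpx] using hb) hab
      have hOne : O.Nonempty := ⟨x, by simpa using hOmem 0⟩
      have hss : A \ O ⊂ A := Finset.sdiff_ssubset hOsub hOne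
      have hperp : (⇑σ)^[p] x = x := by
        rw [← hpx]; exact isPeriodicPt_minimalPeriod ⇑σ x
      have hcl' : ∀ y ∈ A \ O, σ y ∈ A \ O := by
        intro y hy
        rw [Finset.mem_sdiff] at hy ⊢
        refine ⟨hcl y hy.1, fun hmem => hy.2 ?_⟩
        obtain ⟨j, _, hji⟩ := Finset.mem_image.1 hmem
        have h2 : σ ((⇑σ)^[j + p - 1] x) = (⇑σ)^[j] x := by
          have h3 : (j + p - 1) + 1 = j + p := by omega
          calc σ ((⇑σ)^[j + p - 1] x) = (⇑σ)^[(j + p - 1) + 1] x :=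
                (Function.iterate_succ_apply' ⇑σ _ x).symm
            _ = (⇑σ)^[j + p] x := by rw [h3]
            _ = (⇑σ)^[j] ((⇑σ)^[p] x) := by rw [Function.iterate_add_apply]
            _ = (⇑σ)^[j] x := by rw [hperp]
        have hy' : y = (⇑σ)^[j + p - 1] x := σ.injective (by rw [h2, hji])
        rw [hy']
        exact hOmem _
      obtain ⟨q, hq⟩ := ih (A \ O) hss (fun y hy => hA y (Finset.mem_sdiff.1 hy).1) hcl'
      have : A.card = (A \ O).card + O.card := (Finset.card_sdiff_add_card_eq_card hOsub).symm
      rw [this, hq, hcardO]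
      exact ⟨q + 1, by ring⟩

lemma iterate_pi {k : ℕ} (t : ℕ) (a : Fin k → Fin n) :
    (⇑(Equiv.piCongrRight fun _ : Fin k => σ))^[t] a = fun i => (⇑σ)^[t] (a i) := by
  induction t with
  | zero => rfl
  | succ t ih =>
    rw [Function.iterate_succ_apply', ih]
    funext i
    rw [Function.iterate_succ_apply']
    rfl

lemma minPeriod_pi {k : ℕ} (a : Fin k → Fin n) :
    Function.minimalPeriod (⇑(Equiv.piCongrRight fun _ : Fin k => σ)) a =
      Finset.univ.lcm fun i => Function.minimalPeriod ⇑σ (a i) := by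
  set τ := Equiv.piCongrRight fun _ : Fin k => σ with hτ
  set L := Finset.univ.lcm fun i => Function.minimalPeriod ⇑σ (a i) with hL
  have hper : IsPeriodicPt ⇑τ L a := by
    show (⇑τ)^[L] a = a
    rw [iterate_pi]
    funext i
    exact isPeriodicPt_iff_minimalPeriod_dvd.2 (Finset.dvd_lcm (Finset.mem_univ i))
  apply Nat.dvd_antisymm
  · exact hper.minimalPeriod_dvd
  · apply Finset.lcm_dvd
    intro i _
    have hτper : (⇑τ)^[Function.minimalPeriod ⇑τ a] a = a := isPeriodicPt_minimalPeriod ⇑τ a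
    rw [iterate_pi] at hτper
    have : IsPeriodicPt ⇑σ (Function.minimalPeriod ⇑τ a) (a i) := congrFun hτper i
    exact this.minimalPeriod_dvd

end Aux

/-- The cycle type `(j'ₘ)` of the permutation `σ^{×k}` of `(Fin n)^k` (acting componentwise)
is given by
`j'ₘ = ∑_{(r₁,…,r_k) ∈ [n]^k, lcm(r₁,…,r_k) = m} (r₁⋯r_k / lcm(r₁,…,r_k)) j_{r₁}(σ) ⋯ j_{r_k}(σ)`,
where `(jᵢ(σ))` is the cycle type of `σ` and the `lcm` of the empty tuple is `1`
(`Finset.lcm` over the empty type). -/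
theorem cycleCount_piCongr (n k : ℕ) (σ : Equiv.Perm (Fin n)) (m : ℕ) (hm : 0 < m) :
    cycleCount (Equiv.piCongrRight (fun _ : Fin k => σ)) m =
      ∑ r ∈ (Fintype.piFinset (fun _ : Fin k => Finset.Icc 1 n)).filter
          (fun r => Finset.univ.lcm r = m),
        ((∏ i, r i) / Finset.univ.lcm r) * ∏ i, cycleCount σ (r i) := by
  classical
  set P : Fin n → ℕ := fun x => Function.minimalPeriod ⇑σ x with hP
  set c : ℕ → ℕ := fun p => (Finset.univ.filter fun x => P x = p).card with hc
  have hccount : ∀ p, cycleCount σ p = c p / p := by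
    intro p
    rw [cycleCount, Nat.card_eq_fintype_card, Fintype.card_subtype]
  have hdvd : ∀ p, 0 < p → p ∣ c p := by
    intro p hp
    refine dvd_card_of_minPeriod σ hp _ (fun x hx => (Finset.mem_filter.1 hx).2) ?_
    intro x hx
    rw [Finset.mem_filter] at hx ⊢
    refine ⟨Finset.mem_univ _, ?_⟩
    show Function.minimalPeriod ⇑σ (σ x) = p
    rw [minimalPeriod_apply (mem_periodicPts_perm σ x)]
    exact hx.2
  set t := (Fintype.piFinset (fun _ : Fin k => Finset.Icc 1 n)).filter
      (fun r => Finset.univ.lcm r = m) with ht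
  -- the count of points of minimal period `m` as a fiberwise sum
  have hcard : cycleCount (Equiv.piCongrRight (fun _ : Fin k => σ)) m =
      (∑ r ∈ t, ∏ i, c (r i)) / m := by
    rw [cycleCount, Nat.card_eq_fintype_card, Fintype.card_subtype]
    congr 1
    have hfilter : (Finset.univ.filter fun a : Fin k → Fin n =>
        Function.minimalPeriod (⇑(Equiv.piCongrRight fun _ : Fin k => σ)) a = m) =
        Finset.univ.filter fun a => (Finset.univ.lcm fun i => P (a i)) = m := by
      apply Finset.filter_congr
      intro a _
      rw [minPeriod_pi]
    rw [hfilter]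
    have hmem : ∀ a ∈ (Finset.univ.filter fun a : Fin k → Fin n =>
        (Finset.univ.lcm fun i => P (a i)) = m), (fun i => P (a i)) ∈ t := by
      intro a ha
      rw [Finset.mem_filter] at ha
      rw [ht, Finset.mem_filter]
      constructor
      · rw [Fintype.mem_piFinset]
        intro i
        rw [Finset.mem_Icc]
        exact ⟨minPeriod_pos σ (a i), minPeriod_le σ (a i)⟩
      · exact ha.2
    rw [Finset.card_eq_sum_card_fiberwise hmem]
    apply Finset.sum_congr rfl
    intro r hr
    have hrl : Finset.univ.lcm r = m := (Finset.mem_filter.1 hr).2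
    have : ((Finset.univ.filter fun a : Fin k → Fin n =>
        (Finset.univ.lcm fun i => P (a i)) = m).filter fun a => (fun i => P (a i)) = r) =
        Finset.univ.filter fun a : Fin k → Fin n => (fun i => P (a i)) = r := by
      rw [Finset.filter_filter]
      apply Finset.filter_congr
      intro a _
      constructor
      · exact fun h => h.2
      · intro h
        exact ⟨by rw [h, hrl], h⟩
    rw [this]
    -- fiber cardinality is a product
    have e : {a : Fin k → Fin n // (fun i => P (a i)) = r} ≃ ∀ i, {x : Fin n // P x = r i} :=
      (Equiv.subtypeEquivRight (fun a => funext_iff)).trans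
        (Equiv.subtypePiEquivPi (p := fun i x => P x = r i))
    rw [← Fintype.card_subtype, Fintype.card_congr e, Fintype.card_pi]
    exact Finset.prod_congr rfl fun i _ => Fintype.card_subtype _
  rw [hcard]
  have key : ∀ r ∈ t, ∏ i, c (r i) = m * (((∏ i, r i) / m) * ∏ i, c (r i) / r i) := by
    intro r hr
    rw [ht, Finset.mem_filter] at hr
    obtain ⟨hpi, hlcm⟩ := hr
    have hr1 : ∀ i, 1 ≤ r i := fun i => (Finset.mem_Icc.1 (Fintype.mem_piFinset.1 hpi i)).1
    have h1 : ∏ i, c (r i) = (∏ i, r i) * ∏ i, c (r i) / r i := by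
      rw [← Finset.prod_mul_distrib]
      exact Finset.prod_congr rfl fun i _ => (Nat.mul_div_cancel' (hdvd (r i) (hr1 i))).symm
    have h2 : m ∣ ∏ i, r i := by
      rw [← hlcm]
      exact Finset.lcm_dvd fun i _ => Finset.dvd_prod_of_mem r (Finset.mem_univ i)
    rw [h1]
    conv_lhs => rw [← Nat.mul_div_cancel' h2]
    rw [mul_assoc]
  rw [Finset.sum_congr rfl key, ← Finset.mul_sum, Nat.mul_div_cancel_left _ hm]
  apply Finset.sum_congr rfl
  intro r hr
  have hrl : Finset.univ.lcm r = m := (Finset.mem_filter.1 hr).2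
  rw [hrl]
  congr 1
  exact Finset.prod_congr rfl fun i _ => (hccount (r i)).symm
end
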